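/- arXiv:2102.09619 — 7 statements merged into one kernel-verified Lean document; each statement's English description precedes it below -/
import Mathlib

section
/- Let A ⊆ ℝ be a nonempty closed convex set, η > 0, l ≥ 0, b ∈ ℝ, and let f : ℝ × ℝ → ℝ, written f(x,a), be such that for each x ∈ ℝ the map a ↦ f(x,a) is continuously differentiable and η-convex, and for each a ∈ A the map x ↦ ∂ₐf(x,a) is l-Lipschitz (uniformly in a). For (x,y) ∈ ℝ² let α̂(x,y) denote the unique minimizer over A of a ↦ b·a·y + f(x,a). Then for all x, x', y, y' ∈ ℝ: |α̂(x,y) − α̂(x',y')| ≤ (l/(2η))·|x − x'| + (|b|/(2η))·|y − y'|. -/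
/-- A continuously differentiable function `f : ℝ → ℝ` is `η`-convex if
`f z' - f z - (z' - z) * f' z ≥ η * (z' - z)^2` for all `z, z'`. -/
def EtaConvex (η : ℝ) (f : ℝ → ℝ) : Prop :=
  ∀ z z' : ℝ, η * (z' - z) ^ 2 ≤ f z' - f z - (z' - z) * deriv f z

/-- Strong monotonicity of the derivative of an `η`-convex function. -/
lemma etaConvex_mono {η : ℝ} {g : ℝ → ℝ} (h : EtaConvex η g) (z z' : ℝ) :
    2 * η * (z' - z) ^ 2 ≤ (z' - z) * (deriv g z' - deriv g z) := by
  have h1 := h z z'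
  have h2 := h z' z
  nlinarith [sq_nonneg (z' - z)]

/-- First-order optimality condition for the minimizer of an `η`-convex `C¹`
function on a convex set. -/
lemma foc {A : Set ℝ} (hAconv : Convex ℝ A) {η : ℝ} (hη : 0 < η) {g : ℝ → ℝ}
    (hg : ContDiff ℝ 1 g) (hconv : EtaConvex η g) {a a' : ℝ}
    (ha : a ∈ A) (ha' : a' ∈ A) (hmin : ∀ p ∈ A, g a ≤ g p) :
    0 ≤ (a' - a) * deriv g a := by
  have hcont : Continuous (deriv g) := hg.continuous_deriv le_rfl
  have key : ∀ t ∈ Set.Ioc (0:ℝ) 1, 0 ≤ (a' - a) * deriv g (a + t * (a' - a)) := by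
    intro t ht
    set p := a + t * (a' - a) with hp
    have hpA : p ∈ A := by
      have := hAconv ha ha' (by linarith [ht.2] : (0:ℝ) ≤ 1 - t) (le_of_lt ht.1) (by ring)
      have heq : (1 - t) • a + t • a' = p := by simp [hp, smul_eq_mul]; ring
      rwa [heq] at this
    have hc := hconv p a
    have hm := hmin p hpA
    -- hc : η * (a - p)^2 ≤ g a - g p - (a - p) * deriv g p
    have h2 : t * 0 ≤ t * ((a' - a) * deriv g p) := by
      have hap : a - p = -(t * (a' - a)) := by rw [hp]; ring
      rw [hap] at hc
      nlinarith [sq_nonneg (t * (a' - a)), hη.le]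
    exact le_of_mul_le_mul_left h2 ht.1
  have h0 : Filter.Tendsto (fun t : ℝ => (a' - a) * deriv g (a + t * (a' - a)))
      (nhdsWithin 0 (Set.Ioi 0)) (nhds ((a' - a) * deriv g a)) := by
    have hc : Continuous fun t : ℝ => (a' - a) * deriv g (a + t * (a' - a)) := by
      exact continuous_const.mul (hcont.comp (by continuity))
    have := (hc.tendsto 0).mono_left (nhdsWithin_le_nhds (s := Set.Ioi (0:ℝ)))
    simpa using this
  refine ge_of_tendsto h0 ?_
  filter_upwards [Ioc_mem_nhdsGT_of_mem (by norm_num : (0:ℝ) ∈ Set.Ico (0:ℝ) 1)] with t ht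
  exact key t ht

/-- Lipschitz estimate for the minimizer `α̂(x,y)` of `a ↦ b·a·y + f(x,a)` on a
nonempty closed convex set `A`, when `f(x,·)` is `η`-convex and `∂ₐf(·,a)` is
`l`-Lipschitz uniformly in `a ∈ A`. -/
theorem minimizer_lipschitz
    (A : Set ℝ) (hA : A.Nonempty) (hAclosed : IsClosed A) (hAconv : Convex ℝ A)
    (η l b : ℝ) (hη : 0 < η) (hl : 0 ≤ l)
    (f : ℝ → ℝ → ℝ)
    (hf : ∀ x : ℝ, ContDiff ℝ 1 (f x))
    (hconv : ∀ x : ℝ, EtaConvex η (f x))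
    (hlip : ∀ a ∈ A, ∀ x x' : ℝ, |deriv (f x) a - deriv (f x') a| ≤ l * |x - x'|)
    (α : ℝ → ℝ → ℝ)
    (hα : ∀ x y : ℝ, α x y ∈ A ∧
      ∀ a ∈ A, b * (α x y) * y + f x (α x y) ≤ b * a * y + f x a) :
    ∀ x x' y y' : ℝ,
      |α x y - α x' y'| ≤ (l / (2 * η)) * |x - x'| + (|b| / (2 * η)) * |y - y'| := by
  -- derivative of the perturbed objective
  have gderiv : ∀ x y z : ℝ,
      deriv (fun z => b * z * y + f x z) z = b * y + deriv (f x) z := by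
    intro x y z
    have h1 : HasDerivAt (fun z : ℝ => b * z * y) (b * y) z := by
      simpa using ((hasDerivAt_id z).const_mul b).mul_const y
    have h2 : HasDerivAt (f x) (deriv (f x) z) z :=
      (((hf x).differentiable one_ne_zero) z).hasDerivAt
    exact (h1.add h2).deriv
  have gcd : ∀ x y : ℝ, ContDiff ℝ 1 (fun z => b * z * y + f x z) := by
    intro x y
    exact ((contDiff_const.mul contDiff_id).mul contDiff_const).add (hf x)
  have gconv : ∀ x y : ℝ, EtaConvex η (fun z => b * z * y + f x z) := by
    intro x y z z'
    have h := hconv x z z'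
    rw [gderiv x y z]
    have heq : (b * z' * y + f x z') - (b * z * y + f x z) -
        (z' - z) * (b * y + deriv (f x) z)
        = f x z' - f x z - (z' - z) * deriv (f x) z := by ring
    rw [heq]
    exact h
  intro x x' y y'
  obtain ⟨huA, humin⟩ := hα x y
  obtain ⟨hvA, hvmin⟩ := hα x' y'
  set u := α x y with hu
  set v := α x' y' with hv
  -- first-order optimality at both minimizers
  have foc1 : 0 ≤ (v - u) * (b * y + deriv (f x) u) := by
    have := foc hAconv hη (gcd x y) (gconv x y) huA hvA humin
    rwa [gderiv x y u] at this
  have foc2 : 0 ≤ (u - v) * (b * y' + deriv (f x') v) := by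
    have := foc hAconv hη (gcd x' y') (gconv x' y') hvA huA hvmin
    rwa [gderiv x' y' v] at this
  -- strong monotonicity of ∂ₐf(x,·)
  have mono : 2 * η * (v - u) ^ 2 ≤ (v - u) * (deriv (f x) v - deriv (f x) u) :=
    etaConvex_mono (hconv x) u v
  -- Lipschitz bound in x
  have e1 : (v - u) * (deriv (f x) v - deriv (f x') v) ≤ |v - u| * (l * |x - x'|) := by
    calc (v - u) * (deriv (f x) v - deriv (f x') v)
        ≤ |(v - u) * (deriv (f x) v - deriv (f x') v)| := le_abs_self _
      _ = |v - u| * |deriv (f x) v - deriv (f x') v| := abs_mul _ _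
      _ ≤ |v - u| * (l * |x - x'|) :=
          mul_le_mul_of_nonneg_left (hlip v hvA x x') (abs_nonneg _)
  have e2 : (v - u) * (b * (y - y')) ≤ |v - u| * (|b| * |y - y'|) := by
    calc (v - u) * (b * (y - y'))
        ≤ |(v - u) * (b * (y - y'))| := le_abs_self _
      _ = |v - u| * (|b| * |y - y'|) := by rw [abs_mul, abs_mul]
      _ ≤ |v - u| * (|b| * |y - y'|) := le_rfl
  have key : 2 * η * |u - v| ^ 2 ≤ |u - v| * (l * |x - x'| + |b| * |y - y'|) := by
    have hsq : |u - v| ^ 2 = (v - u) ^ 2 := by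
      rw [sq_abs]; ring
    have habs : |u - v| = |v - u| := abs_sub_comm u v
    rw [hsq, habs]
    nlinarith [foc1, foc2, mono, e1, e2]
  rcases (abs_nonneg (u - v)).eq_or_lt with h0 | hpos
  · rw [← h0]
    positivity
  · have hcancel : 2 * η * |u - v| ≤ l * |x - x'| + |b| * |y - y'| := by
      have h2 : (2 * η * |u - v|) * |u - v| ≤ (l * |x - x'| + |b| * |y - y'|) * |u - v| := by
        nlinarith [key]
      exact le_of_mul_le_mul_right h2 hpos
    rw [div_mul_eq_mul_div, div_mul_eq_mul_div, ← add_div, le_div_iff₀ (by positivity)]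
    linarith
end

section
/- Let A ⊆ ℝ be a nonempty closed convex set, η > 0, b ∈ ℝ, and let f : ℝ × ℝ → ℝ, written f(x,a), be such that for each x ∈ ℝ the map a ↦ f(x,a) is continuously differentiable and η-convex. For (x,y) ∈ ℝ² let α̂(x,y) denote the unique minimizer over A of a ↦ b·a·y + f(x,a). Then for every a₀ ∈ A and every (x,y) ∈ ℝ²: |α̂(x,y)| ≤ η⁻¹·(|∂ₐf(x,a₀)| + |b·y|) + |a₀|. -/
/-- Linear growth bound for the minimizer `α̂(x,y)` of `a ↦ b·a·y + f(x,a)` on a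
nonempty closed convex set `A`, when `f(x,·)` is continuously differentiable and
`η`-convex. -/
theorem minimizer_growth_bound
    (A : Set ℝ) (hA : A.Nonempty) (hAclosed : IsClosed A) (hAconv : Convex ℝ A)
    (η b : ℝ) (hη : 0 < η)
    (f : ℝ → ℝ → ℝ)
    (hf : ∀ x : ℝ, ContDiff ℝ 1 (f x))
    (hconv : ∀ x : ℝ, EtaConvex η (f x))
    (α : ℝ → ℝ → ℝ)
    (hα : ∀ x y : ℝ, α x y ∈ A ∧
      ∀ a ∈ A, b * (α x y) * y + f x (α x y) ≤ b * a * y + f x a) :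
    ∀ a₀ ∈ A, ∀ x y : ℝ,
      |α x y| ≤ η⁻¹ * (|deriv (f x) a₀| + |b * y|) + |a₀| := by
  intro a₀ ha₀ x y
  obtain ⟨hmem, hmin⟩ := hα x y
  set v := α x y with hv
  set d := deriv (f x) a₀ with hd
  set M := |d| + |b * y| with hM
  have hM0 : 0 ≤ M := by positivity
  have h1 := hconv x a₀ v
  have h2 := hmin a₀ ha₀
  have key : η * |v - a₀| ^ 2 ≤ |v - a₀| * M := by
    have hstep : η * (v - a₀) ^ 2 ≤ -(v - a₀) * (b * y + d) := by nlinarith [h1, h2]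
    have habs : -(v - a₀) * (b * y + d) ≤ |v - a₀| * M := by
      calc -(v - a₀) * (b * y + d) ≤ |(-(v - a₀)) * (b * y + d)| := le_abs_self _
        _ = |v - a₀| * |b * y + d| := by rw [abs_mul, abs_neg]
        _ ≤ |v - a₀| * M := by
            apply mul_le_mul_of_nonneg_left _ (abs_nonneg _)
            calc |b * y + d| ≤ |b * y| + |d| := abs_add_le _ _
              _ = M := by rw [hM]; ring
    calc η * |v - a₀| ^ 2 = η * (v - a₀) ^ 2 := by rw [sq_abs]
      _ ≤ -(v - a₀) * (b * y + d) := hstep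
      _ ≤ |v - a₀| * M := habs
  have ht : η * |v - a₀| ≤ M := by
    rcases (abs_nonneg (v - a₀)).lt_or_eq with h | h
    · nlinarith [key]
    · rw [← h]; simpa using hM0
  have ht' : |v - a₀| ≤ η⁻¹ * M := (le_inv_mul_iff₀ hη).mpr ht
  have htri : |v| ≤ |v - a₀| + |a₀| := by
    calc |v| = |(v - a₀) + a₀| := by ring_nf
      _ ≤ |v - a₀| + |a₀| := abs_add_le _ _
  linarith
end

section
/- Let η > 0, ζ > 0, b ∈ ℝ, and let f : ℝ → ℝ be continuously differentiable, η-convex, and such that f' is ζ-Lipschitz. For y ∈ ℝ let α̂(y) denote the unique minimizer over ℝ of a ↦ b·a·y + f(a). Then for all y, y' ∈ ℝ: b·(y' − y)·(α̂(y') − α̂(y)) ≤ −(2 b² η / ζ²)·(y' − y)². -/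
/-- Strong monotonicity estimate for the minimizer `α̂(y)` of `a ↦ b·a·y + f(a)`
over `ℝ`, when `f` is `η`-convex with `ζ`-Lipschitz derivative. -/
theorem minimizer_strong_monotonicity
    (η ζ b : ℝ) (hη : 0 < η) (hζ : 0 < ζ)
    (f : ℝ → ℝ) (hf : ContDiff ℝ 1 f) (hconv : EtaConvex η f)
    (hlip : ∀ a a' : ℝ, |deriv f a' - deriv f a| ≤ ζ * |a' - a|)
    (α : ℝ → ℝ)
    (hα : ∀ y : ℝ, ∀ a : ℝ, b * (α y) * y + f (α y) ≤ b * a * y + f a) :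
    ∀ y y' : ℝ,
      b * (y' - y) * (α y' - α y) ≤ -(2 * b ^ 2 * η / ζ ^ 2) * (y' - y) ^ 2 := by
  have hd : ∀ a : ℝ, HasDerivAt f (deriv f a) a := fun a =>
    ((hf.differentiable one_ne_zero) a).hasDerivAt
  have key : ∀ y : ℝ, b * y + deriv f (α y) = 0 := by
    intro y
    have hmin : IsLocalMin (fun a => b * a * y + f a) (α y) :=
      Filter.Eventually.of_forall (hα y)
    have hderiv : HasDerivAt (fun a => b * a * y + f a) (b * y + deriv f (α y)) (α y) := by
      have h1 : HasDerivAt (fun a : ℝ => b * a * y) (b * y) (α y) := by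
        simpa using (((hasDerivAt_id (α y)).const_mul b).mul_const y)
      exact h1.add (hd (α y))
    exact hmin.hasDerivAt_eq_zero hderiv
  intro y y'
  set u := α y
  set v := α y'
  have h1 := hconv u v
  have h2 := hconv v u
  have e1 : deriv f u = -(b * y) := by have := key y; simp only [u]; linarith
  have e2 : deriv f v = -(b * y') := by have := key y'; simp only [v]; linarith
  rw [e1] at h1
  rw [e2] at h2
  have hmono : 2 * η * (v - u) ^ 2 ≤ -(b * (y' - y)) * (v - u) := by nlinarith
  have hl := hlip u v
  have hl2 : (b * (y' - y)) ^ 2 ≤ ζ ^ 2 * (v - u) ^ 2 := by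
    have habs : |b * (y' - y)| ≤ ζ * |v - u| := by
      have : deriv f v - deriv f u = -(b * (y' - y)) := by rw [e1, e2]; ring
      rw [this, abs_neg] at hl
      exact hl
    have := mul_self_le_mul_self (abs_nonneg _) habs
    rw [abs_mul_abs_self] at this
    nlinarith [abs_nonneg (v - u), sq_abs (v - u), sq_abs (b * (y' - y))]
  have hz2 : (0:ℝ) < ζ ^ 2 := by positivity
  rw [neg_mul, div_mul_eq_mul_div, ← neg_div, le_div_iff₀ hz2]
  nlinarith [sq_nonneg (v - u), mul_le_mul_of_nonneg_left hmono (le_of_lt hz2)]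
end

section
/- Let η > 0, ζ > 0, b ∈ ℝ, and let f : ℝ → ℝ be continuously differentiable, η-convex, and such that f' is ζ-Lipschitz. For y ∈ ℝ let α̂(y) denote the unique minimizer over ℝ of a ↦ b·a·y + f(a). Then for all y, y' ∈ ℝ: |α̂(y') − α̂(y)| ≥ (|b|/ζ)·|y' − y|, and moreover b·(y' − y)·(α̂(y') − α̂(y)) ≤ −2η·(α̂(y') − α̂(y))². -/
/-- Reverse-Lipschitz and intermediate monotonicity estimates for the minimizer
`α̂(y)` of `a ↦ b·a·y + f(a)` over `ℝ`, when `f` is `η`-convex with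
`ζ`-Lipschitz derivative. -/
theorem minimizer_reverse_lipschitz_and_monotone
    (η ζ b : ℝ) (hη : 0 < η) (hζ : 0 < ζ)
    (f : ℝ → ℝ) (hf : ContDiff ℝ 1 f) (hconv : EtaConvex η f)
    (hlip : ∀ a a' : ℝ, |deriv f a' - deriv f a| ≤ ζ * |a' - a|)
    (α : ℝ → ℝ)
    (hα : ∀ y : ℝ, ∀ a : ℝ, b * (α y) * y + f (α y) ≤ b * a * y + f a) :
    ∀ y y' : ℝ,
      (|b| / ζ) * |y' - y| ≤ |α y' - α y| ∧
      b * (y' - y) * (α y' - α y) ≤ -(2 * η) * (α y' - α y) ^ 2 := by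
  have hdf : Differentiable ℝ f := hf.differentiable one_ne_zero
  -- first-order condition
  have foc : ∀ y : ℝ, b * y + deriv f (α y) = 0 := by
    intro y
    have hloc : IsLocalMin (fun a => b * a * y + f a) (α y) :=
      Filter.Eventually.of_forall (fun a => hα y a)
    have h1 : HasDerivAt (fun a => b * a * y + f a) (b * 1 * y + deriv f (α y)) (α y) :=
      (((hasDerivAt_id (α y)).const_mul b).mul_const y).add (hdf (α y)).hasDerivAt
    have h2 := hloc.deriv_eq_zero
    rw [h1.deriv] at h2
    linarith [h2]
  intro y y'
  have key : deriv f (α y') - deriv f (α y) = -(b * (y' - y)) := by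
    have := foc y
    have := foc y'
    ring_nf
    ring_nf at *
    linarith
  constructor
  · have h := hlip (α y) (α y')
    rw [key, abs_neg, abs_mul] at h
    rw [div_mul_eq_mul_div, div_le_iff₀ hζ]
    linarith [h]
  · have h1 := hconv (α y) (α y')
    have h2 := hconv (α y') (α y)
    have hsq : (α y - α y') ^ 2 = (α y' - α y) ^ 2 := by ring
    have hk : (α y' - α y) * (deriv f (α y') - deriv f (α y))
        = -(b * (y' - y)) * (α y' - α y) := by rw [key]; ring
    nlinarith [h1, h2, hk, hsq]
end

section
/- Let κ > 0 and K ∈ ℝ with K + 2κ > 0. Let h : [0,∞) → ℝ be continuous with ∫₀^∞ e^{−Kt}·h(t)² dt < ∞, and let x : [0,∞) → ℝ be differentiable with x'(t) = −κ·x(t) + h(t) for all t ≥ 0. Then ∫₀^∞ e^{−Kt}·x(t)² dt < ∞, and sup_{t ≥ 0} e^{−Kt}·x(t)² < ∞. -/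
open MeasureTheory Real Set intervalIntegral

/-- Weighted-`L²` energy estimate for the linear dissipative equation
`x' = -κ x + h` with exponentially weighted square-integrable forcing. -/
theorem dissipative_linear_weighted_L2
    (κ K : ℝ) (hκ : 0 < κ) (hK : 0 < K + 2 * κ)
    (h : ℝ → ℝ) (hcont : ContinuousOn h (Set.Ici 0))
    (hint : IntegrableOn (fun t => Real.exp (-K * t) * (h t) ^ 2) (Set.Ici 0))
    (x : ℝ → ℝ)
    (hx : ∀ t ≥ (0 : ℝ), HasDerivAt x (-κ * x t + h t) t) :
    IntegrableOn (fun t => Real.exp (-K * t) * (x t) ^ 2) (Set.Ici 0) ∧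
      ∃ C : ℝ, ∀ t ≥ (0 : ℝ), Real.exp (-K * t) * (x t) ^ 2 ≤ C := by
  set e : ℝ := (K + 2 * κ) / 2 with he_def
  have he : 0 < e := by positivity
  set E : ℝ → ℝ := fun t => Real.exp (-K * t) * x t ^ 2 with hE_def
  set H : ℝ → ℝ := fun t => Real.exp (-K * t) * h t ^ 2 with hH_def
  set g : ℝ → ℝ := fun t => e * E t - e⁻¹ * H t with hg_def
  -- continuity facts
  have hxc : ContinuousOn x (Ici 0) := fun t ht => ((hx t ht).continuousAt).continuousWithinAt
  have hEc : ContinuousOn E (Ici 0) :=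
    ((Real.continuous_exp.comp (continuous_const.mul continuous_id)).continuousOn).mul
      (hxc.pow 2)
  have hHc : ContinuousOn H (Ici 0) :=
    ((Real.continuous_exp.comp (continuous_const.mul continuous_id)).continuousOn).mul
      (hcont.pow 2)
  have hgc : ContinuousOn g (Ici 0) :=
    (continuousOn_const.mul hEc).sub (continuousOn_const.mul hHc)
  have hEnn : ∀ t, 0 ≤ E t := fun t => by positivity
  have hHnn : ∀ t, 0 ≤ H t := fun t => by positivity
  have hEii : ∀ T : ℝ, 0 ≤ T → IntervalIntegrable E volume 0 T := fun T hT =>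
    (hEc.mono (by rw [uIcc_of_le hT]; exact Icc_subset_Ici_self)).intervalIntegrable
  have hHii : ∀ T : ℝ, 0 ≤ T → IntervalIntegrable H volume 0 T := fun T hT =>
    (hHc.mono (by rw [uIcc_of_le hT]; exact Icc_subset_Ici_self)).intervalIntegrable
  have hgii : ∀ T : ℝ, 0 ≤ T → IntervalIntegrable g volume 0 T := fun T hT =>
    ((hEii T hT).const_mul e).sub ((hHii T hT).const_mul e⁻¹)
  -- derivative of E
  have hE' : ∀ t ≥ (0:ℝ), HasDerivAt E
      ((-K * Real.exp (-K * t)) * x t ^ 2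
        + Real.exp (-K * t) * ((2:ℕ) * x t ^ 1 * (-κ * x t + h t))) t := by
    intro t ht
    have h1 : HasDerivAt (fun s => Real.exp (-K * s)) (-K * Real.exp (-K * t)) t := by
      have h2 := ((hasDerivAt_id t).const_mul (-K)).exp
      simpa [mul_comm] using h2
    exact h1.mul ((hx t ht).pow 2)
  -- key pointwise inequality: E' t + g t ≤ 0
  have hkey : ∀ t ≥ (0:ℝ),
      (-K * Real.exp (-K * t)) * x t ^ 2
        + Real.exp (-K * t) * ((2:ℕ) * x t ^ 1 * (-κ * x t + h t)) + g t ≤ 0 := by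
    intro t ht
    have hexp : 0 < Real.exp (-K * t) := Real.exp_pos _
    simp only [hg_def, hE_def, hH_def, pow_one, Nat.cast_ofNat]
    have expand : -K * Real.exp (-K * t) * x t ^ 2
        + Real.exp (-K * t) * (2 * x t * (-κ * x t + h t))
        + (e * (Real.exp (-K * t) * x t ^ 2) - e⁻¹ * (Real.exp (-K * t) * h t ^ 2))
        = Real.exp (-K * t) * ((-K - 2*κ + e) * x t ^ 2 + 2 * x t * h t - e⁻¹ * h t ^ 2) := by
      ring
    rw [expand]
    have h2 : (-K - 2*κ + e) * x t ^ 2 + 2 * x t * h t - e⁻¹ * h t ^ 2 ≤ 0 := by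
      have hee : -K - 2*κ + e = -e := by rw [he_def]; ring
      rw [hee]
      have hinv : e * e⁻¹ = 1 := mul_inv_cancel₀ he.ne'
      nlinarith [sq_nonneg (e * x t - h t), mul_pos he he, sq_nonneg (x t), sq_nonneg (h t)]
    exact mul_nonpos_of_nonneg_of_nonpos hexp.le h2
  -- the Lyapunov function F is antitone
  set F : ℝ → ℝ := fun t => E t + ∫ s in (0:ℝ)..t, g s with hF_def
  have hF' : ∀ t > (0:ℝ), HasDerivAt F
      ((-K * Real.exp (-K * t)) * x t ^ 2
        + Real.exp (-K * t) * ((2:ℕ) * x t ^ 1 * (-κ * x t + h t)) + g t) t := by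
    intro t ht
    have hprim : HasDerivAt (fun u => ∫ s in (0:ℝ)..u, g s) (g t) t := by
      refine intervalIntegral.integral_hasDerivAt_right (hgii t ht.le) ?_ ?_
      · exact (hgc.mono Ioi_subset_Ici_self).stronglyMeasurableAtFilter isOpen_Ioi t ht
      · exact (hgc.mono Ioi_subset_Ici_self).continuousAt (isOpen_Ioi.mem_nhds ht)
    exact (hE' t ht.le).add hprim
  have hFmono : ∀ t ≥ (0:ℝ), F t ≤ F 0 := by
    intro t ht
    rcases eq_or_lt_of_le ht with rfl | ht'
    · exact le_refl _
    have hFc : ContinuousOn F (Icc 0 t) := by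
      refine (hEc.mono Icc_subset_Ici_self).add ?_
      have := intervalIntegral.continuousOn_primitive_interval
        (μ := volume) (f := g) (a := (0:ℝ)) (b := t)
        (by rw [← intervalIntegrable_iff']; exact hgii t ht)
      rwa [uIcc_of_le ht] at this
    have hint' : interior (Icc (0:ℝ) t) = Ioo 0 t := interior_Icc
    have hanti : AntitoneOn F (Icc 0 t) := by
      refine antitoneOn_of_deriv_nonpos (convex_Icc 0 t) hFc ?_ ?_
      · intro s hs
        rw [hint'] at hs
        exact ((hF' s hs.1).differentiableAt).differentiableWithinAt
      · intro s hs
        rw [hint'] at hs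
        rw [(hF' s hs.1).deriv]
        exact hkey s hs.1.le
    exact hanti (left_mem_Icc.2 ht) ⟨ht, le_refl t⟩ ht
  -- translate: E t + e * ∫₀ᵗ E ≤ E 0 + e⁻¹ * ∫₀ᵗ H
  set M : ℝ := ∫ s in Ici (0:ℝ), H s with hM_def
  have hHbound : ∀ t ≥ (0:ℝ), ∫ s in (0:ℝ)..t, H s ≤ M := by
    intro t ht
    rw [intervalIntegral.integral_of_le ht]
    refine setIntegral_mono_set hint ?_ ?_
    · exact Filter.Eventually.of_forall fun s => hHnn s
    · exact HasSubset.Subset.eventuallyLE (fun s hs => le_of_lt hs.1)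
  have hmain : ∀ t ≥ (0:ℝ), E t + e * ∫ s in (0:ℝ)..t, E s ≤ E 0 + e⁻¹ * M := by
    intro t ht
    have h1 := hFmono t ht
    simp only [hF_def, intervalIntegral.integral_same, add_zero] at h1
    have h2 : ∫ s in (0:ℝ)..t, g s
        = e * (∫ s in (0:ℝ)..t, E s) - e⁻¹ * ∫ s in (0:ℝ)..t, H s := by
      rw [hg_def]
      rw [intervalIntegral.integral_sub ((hEii t ht).const_mul e) ((hHii t ht).const_mul e⁻¹),
        intervalIntegral.integral_const_mul, intervalIntegral.integral_const_mul]
    rw [h2] at h1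
    have h3 := hHbound t ht
    have h4 : 0 < e⁻¹ := inv_pos.2 he
    nlinarith
  -- supremum bound
  have hsup : ∀ t ≥ (0:ℝ), E t ≤ E 0 + e⁻¹ * M := by
    intro t ht
    have h1 := hmain t ht
    have h2 : 0 ≤ ∫ s in (0:ℝ)..t, E s :=
      intervalIntegral.integral_nonneg ht (fun s _ => hEnn s)
    nlinarith
  -- integrability
  have hEineq : ∀ t ≥ (0:ℝ), ∫ s in (0:ℝ)..t, E s ≤ (E 0 + e⁻¹ * M) / e := by
    intro t ht
    have h1 := hmain t ht
    have h2 := hEnn t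
    rw [le_div_iff₀ he]
    nlinarith
  have hIoi : IntegrableOn E (Ioi 0) := by
    refine integrableOn_Ioi_of_intervalIntegral_norm_bounded (μ := volume)
      ((E 0 + e⁻¹ * M) / e) 0 (b := fun i : ℝ => max i 0) (l := Filter.atTop)
      (fun i => ?_) (Filter.tendsto_atTop_mono (fun i => le_max_left i 0) Filter.tendsto_id) ?_
    · exact (hEii (max i 0) (le_max_right i 0)).1
    · filter_upwards with i
      have hnn : (fun s => ‖E s‖) =ᶠ[Filter.atTop] E := by
        filter_upwards with s using Real.norm_of_nonneg (hEnn s)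
      have : ∫ s in (0:ℝ)..(max i 0), ‖E s‖ = ∫ s in (0:ℝ)..(max i 0), E s := by
        apply intervalIntegral.integral_congr
        intro s _
        exact Real.norm_of_nonneg (hEnn s)
      rw [this]
      exact hEineq _ (le_max_right i 0)
  constructor
  · rw [integrableOn_Ici_iff_integrableOn_Ioi]
    exact hIoi
  · exact ⟨E 0 + e⁻¹ * M, hsup⟩
end

section
/- Let κ₂ ∈ ℝ and K ∈ ℝ with K + 2κ₂ > 0. Let B : [0,∞) × ℝ → ℝ be continuous, satisfying the one-sided Lipschitz (dissipativity) condition (u − v)·(B(t,u) − B(t,v)) ≤ −κ₂·(u − v)² for all t ≥ 0 and u, v ∈ ℝ, and such that ∫₀^∞ e^{−Kt}·B(t,0)² dt < ∞. If x : [0,∞) → ℝ is differentiable and satisfies x'(t) = B(t, x(t)) for all t ≥ 0, then ∫₀^∞ e^{−Kt}·x(t)² dt < ∞. -/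
open MeasureTheory Real

/-- Weighted-`L²` estimate for solutions of the dissipative equation
`x' = B(t, x)` with a one-sided Lipschitz (dissipativity) condition on `B`. -/
theorem dissipative_weighted_L2
    (κ₂ K : ℝ) (hK : 0 < K + 2 * κ₂)
    (B : ℝ → ℝ → ℝ)
    (hBcont : ContinuousOn (fun p : ℝ × ℝ => B p.1 p.2) (Set.Ici 0 ×ˢ Set.univ))
    (hdiss : ∀ t ≥ (0 : ℝ), ∀ u v : ℝ,
      (u - v) * (B t u - B t v) ≤ -κ₂ * (u - v) ^ 2)
    (hint : IntegrableOn (fun t => Real.exp (-K * t) * (B t 0) ^ 2) (Set.Ici 0))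
    (x : ℝ → ℝ)
    (hx : ∀ t ≥ (0 : ℝ), HasDerivAt x (B t (x t)) t) :
    IntegrableOn (fun t => Real.exp (-K * t) * (x t) ^ 2) (Set.Ici 0) := by
  set ε : ℝ := (K + 2 * κ₂) / 4 with hεdef
  have hε : 0 < ε := by positivity
  set δ : ℝ := (K + 2 * κ₂) / 2 with hδdef
  have hδ : 0 < δ := by positivity
  set C : ℝ := 1 / (2 * ε) with hCdef
  have hC : 0 < C := by positivity
  set f : ℝ → ℝ := fun t => Real.exp (-K * t) * (x t) ^ 2 with hf
  set h : ℝ → ℝ := fun t => Real.exp (-K * t) * (B t 0) ^ 2 with hh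
  -- continuity of x on Ici 0
  have hxc : ContinuousOn x (Set.Ici 0) := fun t ht =>
    ((hx t ht).continuousAt).continuousWithinAt
  -- continuity of t ↦ B t (x t) on Ici 0
  have hBxc : ContinuousOn (fun t => B t (x t)) (Set.Ici 0) := by
    have : ContinuousOn (fun t => ((t, x t) : ℝ × ℝ)) (Set.Ici 0) :=
      (continuousOn_id).prodMk hxc
    exact hBcont.comp this (fun t ht => ⟨ht, trivial⟩)
  have hB0c : ContinuousOn (fun t => B t 0) (Set.Ici 0) := by
    have : ContinuousOn (fun t => ((t, (0:ℝ)) : ℝ × ℝ)) (Set.Ici 0) :=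
      (continuousOn_id).prodMk continuousOn_const
    exact hBcont.comp this (fun t ht => ⟨ht, trivial⟩)
  -- pointwise bound
  have key : ∀ t ≥ (0:ℝ), 2 * x t * B t (x t) - K * (x t) ^ 2 ≤
      -δ * (x t) ^ 2 + C * (B t 0) ^ 2 := by
    intro t ht
    have h1 := hdiss t ht (x t) 0
    simp only [sub_zero] at h1
    have hs : 0 ≤ C * ((K + 2 * κ₂) / 2 * x t - B t 0) ^ 2 :=
      mul_nonneg hC.le (sq_nonneg _)
    have hexpand : C * ((K + 2 * κ₂) / 2 * x t - B t 0) ^ 2 =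
        (K + 2 * κ₂) / 2 * (x t) ^ 2 - 2 * (x t * B t 0) + C * (B t 0) ^ 2 := by
      rw [hCdef, hεdef]
      field_simp
      ring
    rw [hδdef]
    nlinarith [h1, hs, hexpand]
  -- φ and its derivative
  set φ : ℝ → ℝ := fun t => Real.exp (-K * t) * (x t) ^ 2 with hφ
  set φ' : ℝ → ℝ := fun t => Real.exp (-K * t) *
      (2 * x t * B t (x t) - K * (x t) ^ 2) with hφ'
  have hderiv : ∀ t ≥ (0:ℝ), HasDerivAt φ (φ' t) t := by
    intro t ht
    have he : HasDerivAt (fun s => Real.exp (-K * s)) (Real.exp (-K * t) * (-K)) t := by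
      simpa using ((hasDerivAt_id t).const_mul (-K)).exp
    have hx2 : HasDerivAt (fun s => (x s) ^ 2) (2 * x t * B t (x t)) t := by
      have := (hx t ht).fun_pow 2
      simpa [mul_comm, mul_assoc] using this
    have : HasDerivAt φ _ t := he.fun_mul hx2
    convert this using 1
    simp only [hφ']
    ring
  have hφ'cont : ContinuousOn φ' (Set.Ici 0) := by
    apply ContinuousOn.mul
    · exact (Real.continuous_exp.comp (continuous_const.mul continuous_id)).continuousOn
    · exact ((continuousOn_const.mul hxc).mul hBxc).sub
        (continuousOn_const.mul (hxc.pow 2))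
  have hfcont : ContinuousOn f (Set.Ici 0) := by
    exact ((Real.continuous_exp.comp
      (continuous_const.mul continuous_id)).continuousOn).mul (hxc.pow 2)
  have hhcont : ContinuousOn h (Set.Ici 0) := by
    exact ((Real.continuous_exp.comp
      (continuous_const.mul continuous_id)).continuousOn).mul (hB0c.pow 2)
  have hfnn : ∀ t, 0 ≤ f t := fun t => by positivity
  have hhnn : ∀ t, 0 ≤ h t := fun t => by positivity
  set M : ℝ := ∫ t in Set.Ici (0:ℝ), h t with hM
  -- bound on interval integrals
  have main : ∀ T ≥ (0:ℝ), (∫ t in (0:ℝ)..T, f t) ≤ (φ 0 + C * M) / δ := by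
    intro T hT
    have hsub : Set.uIcc (0:ℝ) T ⊆ Set.Ici 0 := by
      rw [Set.uIcc_of_le hT]
      exact Set.Icc_subset_Ici_self
    have hIf : IntervalIntegrable f volume 0 T :=
      (hfcont.mono hsub).intervalIntegrable
    have hIh : IntervalIntegrable h volume 0 T :=
      (hhcont.mono hsub).intervalIntegrable
    have hIφ' : IntervalIntegrable φ' volume 0 T :=
      (hφ'cont.mono hsub).intervalIntegrable
    have ftc : (∫ t in (0:ℝ)..T, φ' t) = φ T - φ 0 :=
      intervalIntegral.integral_eq_sub_of_hasDerivAt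
        (fun t htmem => hderiv t (hsub htmem)) hIφ'
    have hle : (∫ t in (0:ℝ)..T, φ' t) ≤
        ∫ t in (0:ℝ)..T, (-δ * f t + C * h t) := by
      apply intervalIntegral.integral_mono_on hT hIφ'
      · exact ((hIf.const_mul (-δ)).add (hIh.const_mul C))
      · intro t htmem
        have ht0 : (0:ℝ) ≤ t := htmem.1
        have hb := key t ht0
        have hexp : 0 ≤ Real.exp (-K * t) := (Real.exp_pos _).le
        calc φ' t = Real.exp (-K * t) * (2 * x t * B t (x t) - K * (x t) ^ 2) := rfl
          _ ≤ Real.exp (-K * t) * (-δ * (x t) ^ 2 + C * (B t 0) ^ 2) :=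
              mul_le_mul_of_nonneg_left hb hexp
          _ = -δ * f t + C * h t := by simp only [hf, hh]; ring
    have hsplit : (∫ t in (0:ℝ)..T, (-δ * f t + C * h t)) =
        -δ * (∫ t in (0:ℝ)..T, f t) + C * (∫ t in (0:ℝ)..T, h t) := by
      rw [intervalIntegral.integral_add (hIf.const_mul (-δ)) (hIh.const_mul C),
        intervalIntegral.integral_const_mul, intervalIntegral.integral_const_mul]
    have hhM : (∫ t in (0:ℝ)..T, h t) ≤ M := by
      rw [intervalIntegral.integral_of_le hT]
      apply setIntegral_mono_set hint
      · exact Filter.Eventually.of_forall hhnn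
      · exact HasSubset.Subset.eventuallyLE (Set.Ioc_subset_Icc_self.trans Set.Icc_subset_Ici_self)
    have hφT : 0 ≤ φ T := by positivity
    have := ftc ▸ hle
    rw [hsplit] at this
    have h2 : δ * (∫ t in (0:ℝ)..T, f t) ≤ φ 0 + C * M := by
      nlinarith [mul_le_mul_of_nonneg_left hhM hC.le]
    exact (le_div_iff₀' hδ).mpr h2
  -- conclude integrability
  rw [← Set.Ioi_union_left, integrableOn_union]
  constructor
  · apply integrableOn_Ioi_of_intervalIntegral_norm_bounded ((φ 0 + C * M) / δ) 0
      (b := fun n : ℕ => (n : ℝ)) (l := Filter.atTop)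
    · intro i
      have : IntegrableOn f (Set.Icc 0 (i:ℝ)) :=
        (hfcont.mono Set.Icc_subset_Ici_self).integrableOn_Icc
      exact this.mono_set Set.Ioc_subset_Icc_self
    · exact tendsto_natCast_atTop_atTop
    · filter_upwards [Filter.eventually_ge_atTop 0] with n hn
      have hn' : (0:ℝ) ≤ (n:ℝ) := Nat.cast_nonneg n
      have : (∫ t in (0:ℝ)..(n:ℝ), ‖f t‖) = ∫ t in (0:ℝ)..(n:ℝ), f t := by
        apply intervalIntegral.integral_congr
        intro t _
        exact Real.norm_of_nonneg (hfnn t)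
      rw [this]
      exact main (n:ℝ) hn'
  · exact (integrableOn_singleton_iff (by simp)).mpr (Or.inr (by simp))
end

section
/- Let K ∈ ℝ and κ > 0. Let B, F : [0,∞) × ℝ² → ℝ satisfy the monotonicity condition: for all t ≥ 0 and all (x,y), (x',y') ∈ ℝ², −K·(x−x')·(y−y') − (x−x')·(F(t,x,y) − F(t,x',y')) + (y−y')·(B(t,x,y) − B(t,x',y')) ≤ −κ·((x−x')² + (y−y')²). Suppose (x,y) and (x',y') are differentiable functions from [0,∞) to ℝ satisfying ẋ(t) = B(t, x(t), y(t)), ẏ(t) = −F(t, x(t), y(t)), ẋ'(t) = B(t, x'(t), y'(t)), ẏ'(t) = −F(t, x'(t), y'(t)) for all t ≥ 0, with x(0) = x'(0), and there exists a sequence T_i → ∞ such that e^{−K T_i}·(x(T_i) − x'(T_i))·(y(T_i) − y'(T_i)) → 0. Then x(t) = x'(t) and y(t) = y'(t) for all t ≥ 0. -/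
open Filter Real

/-- Deterministic core of the uniqueness argument for the infinite horizon
FBSDE: under the monotonicity condition on `(B, F)`, two solutions of the
forward-backward system with the same initial forward value and with
`e^{-K T_i}(x - x')(y - y')(T_i) → 0` along some sequence `T_i → ∞` coincide. -/
theorem fbsde_uniqueness_deterministic
    (K κ : ℝ) (hκ : 0 < κ)
    (B F : ℝ → ℝ → ℝ → ℝ)
    (hmono : ∀ t ≥ (0 : ℝ), ∀ x y x' y' : ℝ,
      -K * (x - x') * (y - y') - (x - x') * (F t x y - F t x' y')
        + (y - y') * (B t x y - B t x' y')
        ≤ -κ * ((x - x') ^ 2 + (y - y') ^ 2))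
    (x y x' y' : ℝ → ℝ)
    (hx : ∀ t ≥ (0 : ℝ), HasDerivAt x (B t (x t) (y t)) t)
    (hy : ∀ t ≥ (0 : ℝ), HasDerivAt y (-F t (x t) (y t)) t)
    (hx' : ∀ t ≥ (0 : ℝ), HasDerivAt x' (B t (x' t) (y' t)) t)
    (hy' : ∀ t ≥ (0 : ℝ), HasDerivAt y' (-F t (x' t) (y' t)) t)
    (h0 : x 0 = x' 0)
    (T : ℕ → ℝ) (hT : Tendsto T atTop atTop)
    (hlim : Tendsto (fun i =>
      Real.exp (-K * T i) * (x (T i) - x' (T i)) * (y (T i) - y' (T i)))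
      atTop (nhds 0)) :
    ∀ t ≥ (0 : ℝ), x t = x' t ∧ y t = y' t := by
  set f : ℝ → ℝ := fun t => x t - x' t with hfdef
  set h : ℝ → ℝ := fun t => y t - y' t with hhdef
  set g : ℝ → ℝ := fun t => Real.exp (-K * t) * f t * h t with hgdef
  have hderiv : ∀ t ≥ (0:ℝ), HasDerivAt g
      (Real.exp (-K*t) * (-K * f t * h t
        - f t * (F t (x t) (y t) - F t (x' t) (y' t))
        + h t * (B t (x t) (y t) - B t (x' t) (y' t)))) t := by
    intro t ht
    have he : HasDerivAt (fun s : ℝ => Real.exp (-K * s)) (Real.exp (-K*t) * (-K)) t := by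
      simpa using (((hasDerivAt_id t).const_mul (-K)).exp)
    have hfd : HasDerivAt f (B t (x t) (y t) - B t (x' t) (y' t)) t :=
      (hx t ht).sub (hx' t ht)
    have hhd : HasDerivAt h (-F t (x t) (y t) - -F t (x' t) (y' t)) t :=
      (hy t ht).sub (hy' t ht)
    have := (he.mul hfd).mul hhd
    refine this.congr_deriv ?_
    simp only [Pi.mul_apply]
    ring
  have hcont : ContinuousOn g (Set.Ici 0) := fun t ht =>
    ((hderiv t ht).continuousAt).continuousWithinAt
  have hdle : ∀ t ≥ (0:ℝ),
      Real.exp (-K*t) * (-K * f t * h t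
        - f t * (F t (x t) (y t) - F t (x' t) (y' t))
        + h t * (B t (x t) (y t) - B t (x' t) (y' t)))
      ≤ Real.exp (-K*t) * (-κ * (f t ^ 2 + h t ^ 2)) := by
    intro t ht
    have hm := hmono t ht (x t) (y t) (x' t) (y' t)
    have he : (0:ℝ) < Real.exp (-K*t) := Real.exp_pos _
    have hm' : -K * f t * h t - f t * (F t (x t) (y t) - F t (x' t) (y' t))
        + h t * (B t (x t) (y t) - B t (x' t) (y' t))
        ≤ -κ * (f t ^ 2 + h t ^ 2) := by
      simpa [hfdef, hhdef] using hm
    nlinarith [hm', he]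
  have hanti : AntitoneOn g (Set.Ici 0) := by
    apply antitoneOn_of_deriv_nonpos (convex_Ici 0) hcont
    · intro t ht
      rw [interior_Ici] at ht
      exact ((hderiv t ht.le).differentiableAt).differentiableWithinAt
    · intro t ht
      rw [interior_Ici] at ht
      rw [(hderiv t ht.le).deriv]
      refine le_trans (hdle t ht.le) ?_
      have h1 : -κ * (f t ^ 2 + h t ^ 2) ≤ 0 := by
        nlinarith [sq_nonneg (f t), sq_nonneg (h t)]
      nlinarith [Real.exp_pos (-K*t), h1]
  have hg0 : g 0 = 0 := by simp [hgdef, hfdef, h0]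
  have hgzero : ∀ t ≥ (0:ℝ), g t = 0 := by
    intro t ht
    have hle : g t ≤ 0 := hg0 ▸ hanti Set.self_mem_Ici ht ht
    have hge : (0:ℝ) ≤ g t := by
      have hev : ∀ᶠ i in atTop, g (T i) ≤ g t := by
        filter_upwards [hT.eventually_ge_atTop t] with i hi
        exact hanti ht (le_trans ht hi) hi
      have hgl : Tendsto (fun i => g (T i)) atTop (nhds 0) := hlim
      exact le_of_tendsto hgl hev
    linarith
  have key : ∀ t > (0:ℝ), f t = 0 ∧ h t = 0 := by
    intro t ht
    have hev : g =ᶠ[nhds t] fun _ => (0:ℝ) := by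
      filter_upwards [isOpen_Ioi.mem_nhds (Set.mem_Ioi.mpr ht)] with s hs
      exact hgzero s (le_of_lt hs)
    have hzero : HasDerivAt g 0 t :=
      (hasDerivAt_const t (0:ℝ)).congr_of_eventuallyEq hev
    have heq : Real.exp (-K*t) * (-K * f t * h t
        - f t * (F t (x t) (y t) - F t (x' t) (y' t))
        + h t * (B t (x t) (y t) - B t (x' t) (y' t))) = 0 :=
      (hderiv t ht.le).unique hzero
    have hle := hdle t ht.le
    rw [heq] at hle
    have he : (0:ℝ) < Real.exp (-K*t) := Real.exp_pos _
    have hs : 0 ≤ -κ * (f t ^ 2 + h t ^ 2) := nonneg_of_mul_nonneg_right (by linarith [hle]) he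
    have hsq : f t ^ 2 + h t ^ 2 ≤ 0 := by nlinarith [hs, hκ]
    constructor <;> nlinarith [sq_nonneg (f t), sq_nonneg (h t)]
  intro t ht
  rcases eq_or_lt_of_le ht with heq | hlt
  · subst heq
    refine ⟨h0.symm ▸ rfl, ?_⟩
    -- y 0 = y' 0 by continuity, since h = 0 on (0, ∞)
    have hhc : ContinuousAt h 0 := ((hy 0 le_rfl).sub (hy' 0 le_rfl)).continuousAt
    have h1 : Tendsto h (nhdsWithin 0 (Set.Ioi 0)) (nhds (h 0)) :=
      hhc.continuousWithinAt.tendsto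
    have h2 : Tendsto h (nhdsWithin 0 (Set.Ioi 0)) (nhds 0) := by
      refine Tendsto.congr' ?_ tendsto_const_nhds
      filter_upwards [self_mem_nhdsWithin] with s hs
      exact ((key s hs).2).symm
    have : h 0 = 0 := tendsto_nhds_unique h1 h2
    have := this
    simpa [hhdef, sub_eq_zero] using this
  · obtain ⟨hf, hh⟩ := key t hlt
    constructor
    · simpa [hfdef, sub_eq_zero] using hf
    · simpa [hhdef, sub_eq_zero] using hh
end
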